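/- In the BEG model, the conditional expectation of ω_i² satisfies e^{-cβK/n} f₂(S_n^i/n) ≤ E[ω_i² | (ω_k)_{k≠i}] ≤ e^{cβK/n} f₂(S_n^i/n) for an absolute constant c, where f₂(x) = 2e^{-β} cosh(2βKx)/(1 + 2e^{-β} cosh(2βKx)) and S_n^i = Σ_{k≠i} ω_k. -/
import Mathlib


/-- The spin values of the BEG model. -/
noncomputable def spins : Finset ℝ := {-1, 0, 1}

/-- The (unnormalised) Gibbs weight of a configuration in the BEG model. -/
noncomputable def wBEG (n : ℕ) (β K : ℝ) (ω : Fin n → ℝ) : ℝ :=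
  Real.exp (-β * ∑ j, (ω j) ^ 2 + (β * K / n) * (∑ j, ω j) ^ 2)

noncomputable def f2 (β K x : ℝ) : ℝ :=
  2 * Real.exp (-β) * Real.cosh (2 * β * K * x) /
    (1 + 2 * Real.exp (-β) * Real.cosh (2 * β * K * x))

lemma sum_spins (g : ℝ → ℝ) : ∑ t ∈ spins, g t = g (-1) + g 0 + g 1 := by
  have h1 : (-1 : ℝ) ∉ ({0, 1} : Finset ℝ) := by norm_num
  have h2 : (0 : ℝ) ∉ ({1} : Finset ℝ) := by norm_num
  rw [spins, Finset.sum_insert h1, Finset.sum_insert h2, Finset.sum_singleton]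
  ring

lemma ratio_bounds (d B : ℝ) (hd : 0 ≤ d) (hB : 0 < B) :
    Real.exp (-d) * (B / (1 + B)) ≤ Real.exp d * B / (1 + Real.exp d * B) ∧
    Real.exp d * B / (1 + Real.exp d * B) ≤ Real.exp d * (B / (1 + B)) := by
  have h1 : 1 ≤ Real.exp d := Real.one_le_exp hd
  have h2 : Real.exp (-d) ≤ 1 := Real.exp_le_one_iff.mpr (by linarith)
  have h3 : Real.exp (-d) * Real.exp d = 1 := by rw [← Real.exp_add]; simp
  have hed : 0 < Real.exp d := Real.exp_pos d
  have hB1 : 0 < 1 + B := by linarith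
  have hB2 : 0 < 1 + Real.exp d * B := by nlinarith
  constructor
  · rw [mul_div_assoc', div_le_div_iff₀ hB1 hB2]
    nlinarith [mul_pos hB hB, mul_le_mul_of_nonneg_right h2 hB.le,
      mul_le_mul_of_nonneg_right h1 (mul_pos hB hB).le]
  · rw [mul_div_assoc']
    gcongr
    nlinarith

theorem stmt_12 :
    ∃ c : ℝ, ∀ (n : ℕ), 1 ≤ n → ∀ (β K : ℝ), 0 < β → 0 < K →
      ∀ (ω : Fin n → ℝ), (∀ j, ω j ∈ spins) → ∀ i : Fin n,
        Real.exp (-(c * β * K) / n) * f2 β K (((∑ j, ω j) - ω i) / n) ≤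
          (∑ t ∈ spins, t ^ 2 * wBEG n β K (Function.update ω i t)) /
            (∑ t ∈ spins, wBEG n β K (Function.update ω i t)) ∧
        (∑ t ∈ spins, t ^ 2 * wBEG n β K (Function.update ω i t)) /
            (∑ t ∈ spins, wBEG n β K (Function.update ω i t)) ≤
          Real.exp ((c * β * K) / n) * f2 β K (((∑ j, ω j) - ω i) / n) := by
  use 1
  intro n hn β K hβ hK ω hω i
  set S : ℝ := (∑ j, ω j) - ω i with hS
  set Q : ℝ := (∑ j, (ω j) ^ 2) - (ω i) ^ 2 with hQ
  set d : ℝ := β * K / n with hd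
  set x : ℝ := S / n with hx
  -- sums after update
  have hsub : ({i} : Finset (Fin n)) ⊆ Finset.univ := Finset.subset_univ _
  have hsum : ∀ t : ℝ, (∑ j, Function.update ω i t j) = S + t := by
    intro t
    rw [Finset.sum_update_of_mem (Finset.mem_univ i),
      Finset.sum_sdiff_eq_sub hsub, Finset.sum_singleton, hS]
    ring
  have hsumsq : ∀ t : ℝ, (∑ j, (Function.update ω i t j) ^ 2) = Q + t ^ 2 := by
    intro t
    have h : ∀ j ∈ Finset.univ, (Function.update ω i t j) ^ 2
        = Function.update (fun j => (ω j) ^ 2) i (t ^ 2) j := by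
      intro j _
      by_cases h : j = i <;> simp [Function.update_apply, h]
    rw [Finset.sum_congr rfl h, Finset.sum_update_of_mem (Finset.mem_univ i),
      Finset.sum_sdiff_eq_sub hsub, Finset.sum_singleton, hQ]
    ring
  set E : ℝ := Real.exp (-β * Q + d * S ^ 2) with hE
  have hEpos : 0 < E := Real.exp_pos _
  have hw : ∀ t : ℝ, wBEG n β K (Function.update ω i t)
      = E * Real.exp (-β * t ^ 2 + d * (2 * S * t + t ^ 2)) := by
    intro t
    rw [wBEG, hsum, hsumsq, hE, ← Real.exp_add, ← hd]
    congr 1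
    ring
  set B : ℝ := 2 * Real.exp (-β) * Real.cosh (2 * β * K * x) with hB
  have hBpos : 0 < B := by
    have := Real.cosh_pos (x := 2 * β * K * x)
    positivity
  have hdpos : 0 ≤ d := by rw [hd]; positivity
  -- the two exponentials
  have hy : 2 * β * K * x = d * (2 * S) := by rw [hx, hd]; ring
  have hA : Real.exp (-β * (-1) ^ 2 + d * (2 * S * (-1) + (-1) ^ 2))
      + Real.exp (-β * 1 ^ 2 + d * (2 * S * 1 + 1 ^ 2)) = Real.exp d * B := by
    rw [hB, hy, Real.cosh_eq,
      show -β * (-1 : ℝ) ^ 2 + d * (2 * S * (-1) + (-1) ^ 2) = d + -β + -(d * (2 * S)) by ring,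
      show -β * (1 : ℝ) ^ 2 + d * (2 * S * 1 + 1 ^ 2) = d + -β + d * (2 * S) by ring,
      Real.exp_add, Real.exp_add, Real.exp_add, Real.exp_add, Real.exp_neg]
    ring
  have hNum : (∑ t ∈ spins, t ^ 2 * wBEG n β K (Function.update ω i t))
      = E * (Real.exp d * B) := by
    rw [sum_spins (fun t => t ^ 2 * wBEG n β K (Function.update ω i t)),
      hw (-1), hw 0, hw 1, ← hA]
    ring
  have hDen : (∑ t ∈ spins, wBEG n β K (Function.update ω i t))
      = E * (1 + Real.exp d * B) := by
    rw [sum_spins (fun t => wBEG n β K (Function.update ω i t)),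
      hw (-1), hw 0, hw 1, ← hA,
      show -β * (0 : ℝ) ^ 2 + d * (2 * S * 0 + 0 ^ 2) = 0 by ring, Real.exp_zero]
    ring
  have hratio : (∑ t ∈ spins, t ^ 2 * wBEG n β K (Function.update ω i t)) /
      (∑ t ∈ spins, wBEG n β K (Function.update ω i t))
      = Real.exp d * B / (1 + Real.exp d * B) := by
    rw [hNum, hDen, mul_div_mul_left _ _ (ne_of_gt hEpos)]
  have hf2 : f2 β K x = B / (1 + B) := by rw [f2, hB]
  have hc1 : -(1 * β * K) / (n : ℝ) = -d := by rw [hd]; ring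
  have hc2 : (1 * β * K) / (n : ℝ) = d := by rw [hd]; ring
  rw [hratio, hf2, hc1, hc2]
  exact ratio_bounds d B hdpos hBpos
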